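/- arXiv:1306.0854 — 2 statements merged into one kernel-verified Lean document; each statement's English description precedes it below -/
import Mathlib

section
/- Let s ≠ 1 be a complex number. The fourth mixed partial derivative d/dz₁ d/dz₂ d/dw₁ d/dw₂ of F(w₁,w₂,z₁,z₂) = (s+w₁−1)(s+w₂−1)(s+z₁−1)(s+z₂−1) / [ (s−1)(s+w₁+w₂−1)(s+w₁+z₂−1)(s+z₁+w₂−1)(s+z₁+z₂−1) ], evaluated at w₁ = w₂ = z₁ = z₂ = 0, equals 7/(s−1)⁵. -/
/-!
Put `a = s - 1`, so that `F = shiftedRatio a`. Differentiating in one variable at a time, each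
partial derivative at `0` is again an explicit rational function of the remaining variables on a
neighbourhood of `0` (where its denominators do not vanish), so the next derivative is taken of
that closed form.
-/

open Topology

variable {𝕜 : Type*} [NontriviallyNormedField 𝕜] {a w₁ z₁ z₂ : 𝕜}

def shiftedRatio (a w₁ w₂ z₁ z₂ : 𝕜) : 𝕜 :=
  (a + w₁) * (a + w₂) * (a + z₁) * (a + z₂) /
    (a * (a + w₁ + w₂) * (a + w₁ + z₂) * (a + z₁ + w₂) * (a + z₁ + z₂))

lemma eventually_add_ne_zero {c : 𝕜} (hc : c ≠ 0) : ∀ᶠ x in 𝓝 (0 : 𝕜), c + x ≠ 0 :=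
  (continuous_const.add continuous_id).continuousAt.eventually_ne (by simpa using hc)

lemma shiftedRatio_deriv_w₂ (ha : a ≠ 0) (hw₁ : a + w₁ ≠ 0) (hz₁ : a + z₁ ≠ 0)
    (hw₁z₂ : a + w₁ + z₂ ≠ 0) (hz₁z₂ : a + z₁ + z₂ ≠ 0) :
    deriv (fun w₂ => shiftedRatio a w₁ w₂ z₁ z₂) 0 =
      (a + z₂) * (w₁ * z₁ - a ^ 2) /
        (a * (a + w₁) * (a + z₁) * (a + w₁ + z₂) * (a + z₁ + z₂)) := by
  have hN := ((((hasDerivAt_id' (0 : 𝕜)).const_add a).const_mul (a + w₁)).mul_const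
    (a + z₁)).mul_const (a + z₂)
  have hD := (((((hasDerivAt_id' (0 : 𝕜)).const_add (a + w₁)).const_mul a).mul_const
    (a + w₁ + z₂)).fun_mul ((hasDerivAt_id' (0 : 𝕜)).const_add (a + z₁))).mul_const (a + z₁ + z₂)
  refine ((hN.fun_div hD (by simp [*])).deriv).trans ?_
  simp only [add_zero]
  field_simp
  ring

lemma shiftedRatio_deriv_w₁_w₂ (ha : a ≠ 0) (hz₁ : a + z₁ ≠ 0) (hz₂ : a + z₂ ≠ 0)
    (hz₁z₂ : a + z₁ + z₂ ≠ 0) :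
    deriv (fun w₁ => deriv (fun w₂ => shiftedRatio a w₁ w₂ z₁ z₂) 0) 0 =
      ((a + z₁) * (a + z₂) + a ^ 2) / (a ^ 2 * (a + z₁) * (a + z₂) * (a + z₁ + z₂)) := by
  have hev : (fun w₁ => deriv (fun w₂ => shiftedRatio a w₁ w₂ z₁ z₂) 0) =ᶠ[𝓝 0]
      fun w₁ => (a + z₂) * (w₁ * z₁ - a ^ 2) /
        (a * (a + w₁) * (a + z₁) * (a + w₁ + z₂) * (a + z₁ + z₂)) := by
    filter_upwards [eventually_add_ne_zero ha, eventually_add_ne_zero hz₂] with w₁ hw₁ hw₁z₂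
    exact shiftedRatio_deriv_w₂ ha hw₁ hz₁ (by rwa [add_right_comm]) hz₁z₂
  rw [hev.deriv_eq]
  have hN := (((hasDerivAt_id' (0 : 𝕜)).mul_const z₁).sub_const (a ^ 2)).const_mul (a + z₂)
  have hD := (((((hasDerivAt_id' (0 : 𝕜)).const_add a).const_mul a).mul_const (a + z₁)).fun_mul
    (((hasDerivAt_id' (0 : 𝕜)).const_add a).add_const z₂)).mul_const (a + z₁ + z₂)
  refine ((hN.fun_div hD (by simp [*])).deriv).trans ?_
  simp only [add_zero, zero_mul, zero_sub]
  field_simp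
  ring

lemma shiftedRatio_deriv_z₂_w₁_w₂ (ha : a ≠ 0) (hz₁ : a + z₁ ≠ 0) :
    deriv (fun z₂ => deriv (fun w₁ => deriv (fun w₂ => shiftedRatio a w₁ w₂ z₁ z₂) 0) 0) 0 =
      -(3 * a + 2 * z₁) / (a ^ 2 * (a + z₁) ^ 3) := by
  have hev : (fun z₂ => deriv (fun w₁ => deriv (fun w₂ => shiftedRatio a w₁ w₂ z₁ z₂) 0) 0)
      =ᶠ[𝓝 0] fun z₂ =>
        ((a + z₁) * (a + z₂) + a ^ 2) / (a ^ 2 * (a + z₁) * (a + z₂) * (a + z₁ + z₂)) := by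
    filter_upwards [eventually_add_ne_zero ha, eventually_add_ne_zero hz₁] with z₂ hz₂ hz₁z₂
    exact shiftedRatio_deriv_w₁_w₂ ha hz₁ hz₂ hz₁z₂
  rw [hev.deriv_eq]
  have hN := (((hasDerivAt_id' (0 : 𝕜)).const_add a).const_mul (a + z₁)).add_const (a ^ 2)
  have hD := (((hasDerivAt_id' (0 : 𝕜)).const_add a).const_mul (a ^ 2 * (a + z₁))).fun_mul
    ((hasDerivAt_id' (0 : 𝕜)).const_add (a + z₁))
  refine ((hN.fun_div hD (by simp [*])).deriv).trans ?_
  simp only [add_zero]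
  field_simp
  ring

lemma shiftedRatio_deriv_z₁_z₂_w₁_w₂ (ha : a ≠ 0) :
    deriv (fun z₁ => deriv (fun z₂ => deriv (fun w₁ =>
      deriv (fun w₂ => shiftedRatio a w₁ w₂ z₁ z₂) 0) 0) 0) 0 = 7 / a ^ 5 := by
  have hev : (fun z₁ => deriv (fun z₂ => deriv (fun w₁ =>
      deriv (fun w₂ => shiftedRatio a w₁ w₂ z₁ z₂) 0) 0) 0)
      =ᶠ[𝓝 0] fun z₁ => -(3 * a + 2 * z₁) / (a ^ 2 * (a + z₁) ^ 3) := by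
    filter_upwards [eventually_add_ne_zero ha] with z₁ hz₁
    exact shiftedRatio_deriv_z₂_w₁_w₂ ha hz₁
  rw [hev.deriv_eq]
  have hN := (((hasDerivAt_id' (0 : 𝕜)).const_mul 2).const_add (3 * a)).fun_neg
  have hD := (((hasDerivAt_id' (0 : 𝕜)).const_add a).fun_pow 3).const_mul (a ^ 2)
  refine ((hN.fun_div hD (by simp [*])).deriv).trans ?_
  simp only [add_zero]
  field_simp
  ring

theorem stmt_14 (s : ℂ) (hs : s ≠ 1) :
    deriv (fun z₁ : ℂ =>
      deriv (fun z₂ : ℂ =>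
        deriv (fun w₁ : ℂ =>
          deriv (fun w₂ : ℂ =>
            (s + w₁ - 1) * (s + w₂ - 1) * (s + z₁ - 1) * (s + z₂ - 1) /
              ((s - 1) * (s + w₁ + w₂ - 1) * (s + w₁ + z₂ - 1) *
                (s + z₁ + w₂ - 1) * (s + z₁ + z₂ - 1))) 0) 0) 0) 0
      = 7 / (s - 1) ^ 5 := by
  have shift₁ (w : ℂ) : s + w - 1 = s - 1 + w := by ring
  have shift₂ (w w' : ℂ) : s + w + w' - 1 = s - 1 + w + w' := by ring
  simp only [shift₁, shift₂]
  exact shiftedRatio_deriv_z₁_z₂_w₁_w₂ (sub_ne_zero.mpr hs)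
end

section
/- Let a : ℕ → ℂ be supported on primes p ≤ x and define coefficients a_{m,x}(n) by (∑_{p ≤ x} a(p) p^{−s})^m = ∑_{n ≤ x^m} a_{m,x}(n) n^{−s}, i.e., a_{m,x}(n) = ∑_{p₁⋯p_m = n, each p_i ≤ x prime} a(p₁)⋯a(p_m). Then ∑_{n ≤ x^m} |a_{m,x}(n)|²/n ≤ m! · (∑_{p ≤ x} |a(p)|²/p)^m. -/
/-!
For each `n`, Cauchy–Schwarz bounds `|a_{m,x}(n)|²` by the number of representations
`n = p₁ ⋯ pₘ` times `∑ |a(p₁) ⋯ a(pₘ)|²`. By unique factorisation all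
representations of `n` are rearrangements of one another, so there are at most `m!` of them.
Dividing by `n = p₁ ⋯ pₘ` and summing over `n` recombines the tuples into
`(∑_{p ≤ x} |a(p)|² / p)ᵐ`.
-/

open Finset
open scoped Nat

theorem Tuple.comp_sort_eq_of_perm {α : Type*} [LinearOrder α] {n : ℕ} {f g : Fin n → α}
    (h : (List.ofFn f).Perm (List.ofFn g)) : f ∘ Tuple.sort f = g ∘ Tuple.sort g := by
  refine List.ofFn_injective <| List.Perm.eq_of_sortedLE (Tuple.monotone_sort f).sortedLE_ofFn
    (Tuple.monotone_sort g).sortedLE_ofFn ?_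
  exact ((Equiv.Perm.ofFn_comp_perm _ f).trans h).trans (Equiv.Perm.ofFn_comp_perm _ g).symm

/-- Tuples that are rearrangements of one list are determined by the permutation sorting them. -/
theorem card_le_factorial_of_forall_ofFn_perm {α : Type*} [LinearOrder α] {m : ℕ}
    (s : Finset (Fin m → α)) (l : List α) (hs : ∀ f ∈ s, (List.ofFn f).Perm l) : #s ≤ m ! := by
  calc #s ≤ #(univ : Finset (Equiv.Perm (Fin m))) := by
        refine card_le_card_of_injOn Tuple.sort (fun _ _ => mem_coe.2 (mem_univ _)) ?_
        intro f hf g hg hfg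
        have hsort := Tuple.comp_sort_eq_of_perm ((hs f hf).trans (hs g hg).symm)
        rw [← hfg] at hsort
        exact (Tuple.sort f).surjective.injective_comp_right hsort
    _ = m ! := by rw [card_univ, Fintype.card_perm, Fintype.card_fin]

theorem ofFn_perm_primeFactorsList_prod {m : ℕ} {f : Fin m → ℕ} (hf : ∀ i, (f i).Prime) :
    (List.ofFn f).Perm (∏ i, f i).primeFactorsList :=
  Nat.primeFactorsList_unique (by rw [List.prod_ofFn])
    (by simpa [List.mem_ofFn] using hf)

theorem card_filter_prod_eq_le_factorial {P : Finset ℕ} (hP : ∀ p ∈ P, p.Prime) (m n : ℕ) :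
    #{f ∈ Fintype.piFinset fun _ : Fin m => P | ∏ i, f i = n} ≤ m ! := by
  refine card_le_factorial_of_forall_ofFn_perm _ n.primeFactorsList fun f hf => ?_
  rw [mem_filter, Fintype.mem_piFinset] at hf
  exact hf.2 ▸ ofFn_perm_primeFactorsList_prod fun i => hP _ (hf.1 i)

theorem norm_sum_sq_le_card_mul_sum_norm_sq {ι E : Type*} [SeminormedAddCommGroup E]
    (s : Finset ι) (z : ι → E) : ‖∑ i ∈ s, z i‖ ^ 2 ≤ #s * ∑ i ∈ s, ‖z i‖ ^ 2 :=
  (pow_le_pow_left₀ (norm_nonneg _) (norm_sum_le _ _) 2).trans sq_sum_le_card_mul_sum_sq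

theorem Nat.pow_floor_le_floor_pow {R : Type*} [Semiring R] [LinearOrder R]
    [IsStrictOrderedRing R] [FloorSemiring R] (x : R) (m : ℕ) : ⌊x⌋₊ ^ m ≤ ⌊x ^ m⌋₊ := by
  rcases le_or_gt 0 x with hx | hx
  · refine Nat.le_floor ?_
    push_cast
    exact pow_le_pow_left₀ (Nat.cast_nonneg _) (Nat.floor_le hx) m
  · rw [Nat.floor_eq_zero.mpr (hx.trans zero_lt_one)]
    rcases m with _ | m <;> simp

theorem norm_sum_prod_sq_div_le {ι : Type*} [Fintype ι] (a : ℕ → ℂ) (s : Finset (ι → ℕ))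
    {n C : ℕ} (hs : #s ≤ C) (hn : ∀ f ∈ s, ∏ i, f i = n) :
    ‖∑ f ∈ s, ∏ i, a (f i)‖ ^ 2 / n ≤ C * ∑ f ∈ s, ∏ i, ‖a (f i)‖ ^ 2 / f i := by
  calc ‖∑ f ∈ s, ∏ i, a (f i)‖ ^ 2 / n
      ≤ (#s * ∑ f ∈ s, ‖∏ i, a (f i)‖ ^ 2) / n := by
        gcongr; exact norm_sum_sq_le_card_mul_sum_norm_sq _ _
    _ ≤ C * ∑ f ∈ s, ‖∏ i, a (f i)‖ ^ 2 / n := by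
        rw [mul_div_assoc, sum_div]; gcongr
    _ = C * ∑ f ∈ s, ∏ i, ‖a (f i)‖ ^ 2 / f i := by
        refine congrArg _ (sum_congr rfl fun f hf => ?_)
        rw [← hn f hf, Nat.cast_prod, norm_prod, ← prod_pow, prod_div_distrib]

theorem stmt_16_general (x : ℝ) (m : ℕ) (a : ℕ → ℂ) :
    ∑ n ∈ Finset.Icc 1 (Nat.floor (x ^ m)),
        ‖∑ f ∈ (Fintype.piFinset fun _ : Fin m =>
              (Finset.range (Nat.floor x + 1)).filter Nat.Prime).filter
              (fun f => ∏ i, f i = n),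
            ∏ i, a (f i)‖ ^ 2 / (n : ℝ)
      ≤ (m.factorial : ℝ) *
          (∑ p ∈ (Finset.range (Nat.floor x + 1)).filter Nat.Prime,
            ‖a p‖ ^ 2 / (p : ℝ)) ^ m := by
  set P := (Finset.range (Nat.floor x + 1)).filter Nat.Prime
  have hP : ∀ p ∈ P, p.Prime := fun p hp => (mem_filter.mp hp).2
  have hprod_mem : ∀ f ∈ Fintype.piFinset fun _ : Fin m => P, ∏ i, f i ∈ Icc 1 ⌊x ^ m⌋₊ := by
    intro f hf
    rw [Fintype.mem_piFinset] at hf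
    refine mem_Icc.2 ⟨one_le_prod' fun i _ => (hP _ (hf i)).one_le, ?_⟩
    calc ∏ i, f i ≤ ∏ _i : Fin m, ⌊x⌋₊ :=
          prod_le_prod' fun i _ => Nat.lt_succ_iff.1 (mem_range.1 (mem_filter.1 (hf i)).1)
      _ ≤ ⌊x ^ m⌋₊ := by rw [Fin.prod_const]; exact Nat.pow_floor_le_floor_pow x m
  calc _ ≤ ∑ n ∈ Icc 1 ⌊x ^ m⌋₊, (m ! : ℝ) * ∑ f ∈ {f ∈ Fintype.piFinset fun _ : Fin m => P |
          ∏ i, f i = n}, ∏ i, ‖a (f i)‖ ^ 2 / f i :=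
        sum_le_sum fun n _ => norm_sum_prod_sq_div_le a _
          (card_filter_prod_eq_le_factorial hP m n) fun _ hf => (mem_filter.1 hf).2
    _ = m ! * ∑ f ∈ Fintype.piFinset fun _ : Fin m => P, ∏ i, ‖a (f i)‖ ^ 2 / f i := by
        rw [← mul_sum, sum_fiberwise_of_maps_to hprod_mem]
    _ = _ := by rw [sum_pow']

theorem stmt_16 (x : ℝ) (hx : 2 ≤ x) (m : ℕ) (a : ℕ → ℂ)
    (ha : ∀ p : ℕ, a p ≠ 0 → p.Prime ∧ (p : ℝ) ≤ x) :
    ∑ n ∈ Finset.Icc 1 (Nat.floor (x ^ m)),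
        ‖∑ f ∈ (Fintype.piFinset fun _ : Fin m =>
              (Finset.range (Nat.floor x + 1)).filter Nat.Prime).filter
              (fun f => ∏ i, f i = n),
            ∏ i, a (f i)‖ ^ 2 / (n : ℝ)
      ≤ (m.factorial : ℝ) *
          (∑ p ∈ (Finset.range (Nat.floor x + 1)).filter Nat.Prime,
            ‖a p‖ ^ 2 / (p : ℝ)) ^ m :=
  stmt_16_general x m a
end
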